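/- arXiv:math/0201010 — 5 statements merged into one kernel-verified Lean document; each statement's English description precedes it below -/
import Mathlib

section
/- Let f be holomorphic on a neighborhood of the closed disc of radius 3^k with |f(z)| ≥ 1 on the annulus {3 ≤ |z| ≤ 3^k}, and let W be the number of zeros of f in the open disc of radius 3. Then ∫_{3T} ln|f(ζ)| dm(ζ) = ∫_{3^k T} ln|f(ζ)| dm(ζ) − (k−1)·W·ln 3. -/
/-!
Writing `f = ∏ (z - a) * g` with `g` holomorphic and zero-free on the disc, on every circle
`|z| = r` enclosing all the zeros each factor `log |z - a|` averages to `log r` and `log |g|`,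
being harmonic, averages to `log |g 0|`. Hence the average of `log |f|` over that circle is
`W log r + log |g 0|`, and comparing `r = 3` with `r = 3 ^ k` gives the identity.
-/

/-- The average of a real-valued function over the circle of radius `r` centered at `0`,
with respect to normalized Lebesgue measure of total mass 1. -/
noncomputable def circAvg (r : ℝ) (u : ℂ → ℝ) : ℝ :=
  (2 * Real.pi)⁻¹ * ∫ θ in (0:ℝ)..(2 * Real.pi), u (circleMap 0 r θ)

open Metric Real

theorem circAvg_eq_circleAverage (r : ℝ) (u : ℂ → ℝ) : circAvg r u = circleAverage u 0 r := rfl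

theorem circleAverage_log_norm_sub_mul {c a : ℂ} {r : ℝ} (ha : a ∈ ball c |r|) {G : ℂ → ℂ}
    (hG : MeromorphicOn G (sphere c |r|)) (hG₀ : ∀ z ∈ sphere c |r|, G z ≠ 0) :
    circleAverage (fun z => log ‖(z - a) * G z‖) c r =
      log r + circleAverage (fun z => log ‖G z‖) c r := by
  have hsplit : Set.EqOn (fun z => log ‖(z - a) * G z‖)
      ((fun z => log ‖z - a‖) + fun z => log ‖G z‖) (sphere c |r|) := by
    intro z hz
    have hza : z - a ≠ 0 := sub_ne_zero.2 (sphere_disjoint_ball.ne_of_mem hz ha)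
    simp only [Pi.add_apply, norm_mul]
    exact log_mul (norm_ne_zero_iff.2 hza) (norm_ne_zero_iff.2 (hG₀ z hz))
  rw [circleAverage_congr_sphere hsplit,
    circleAverage_add (circleIntegrable_log_norm_sub_const r) hG.circleIntegrable_log_norm,
    circleAverage_log_norm_sub_const_of_mem_closedBall (ball_subset_closedBall ha)]

theorem circleAverage_log_norm_multiset_prod_sub_mul {c : ℂ} {r : ℝ} {Z : Multiset ℂ}
    (hZ : ∀ a ∈ Z, a ∈ ball c |r|) {G : ℂ → ℂ}
    (hG : MeromorphicOn G (sphere c |r|)) (hG₀ : ∀ z ∈ sphere c |r|, G z ≠ 0) :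
    circleAverage (fun z => log ‖(Z.map fun a => z - a).prod * G z‖) c r =
      Multiset.card Z * log r + circleAverage (fun z => log ‖G z‖) c r := by
  induction Z using Multiset.induction_on generalizing G with
  | empty => simp
  | cons a S ih =>
    have ha := hZ a (Multiset.mem_cons_self a S)
    have hG' : MeromorphicOn (fun z => (z - a) * G z) (sphere c |r|) :=
      (analyticOnNhd_id.sub analyticOnNhd_const).meromorphicOn.mul hG
    have hG'₀ : ∀ z ∈ sphere c |r|, (z - a) * G z ≠ 0 := fun z hz =>
      mul_ne_zero (sub_ne_zero.2 (sphere_disjoint_ball.ne_of_mem hz ha)) (hG₀ z hz)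
    calc circleAverage (fun z => log ‖((a ::ₘ S).map fun b => z - b).prod * G z‖) c r
        = circleAverage (fun z => log ‖(S.map fun b => z - b).prod * ((z - a) * G z)‖) c r := by
          simp only [Multiset.map_cons, Multiset.prod_cons, mul_left_comm, mul_assoc]
      _ = Multiset.card S * log r + circleAverage (fun z => log ‖(z - a) * G z‖) c r :=
          ih (fun b hb => hZ b (Multiset.mem_cons_of_mem hb)) hG' hG'₀
      _ = Multiset.card (a ::ₘ S) * log r + circleAverage (fun z => log ‖G z‖) c r := by
          rw [circleAverage_log_norm_sub_mul ha hG hG₀, Multiset.card_cons]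
          push_cast
          ring

theorem circleAverage_log_norm_multiset_prod_sub_mul_of_ne_zero {c : ℂ} {r : ℝ} {Z : Multiset ℂ}
    (hZ : ∀ a ∈ Z, a ∈ ball c |r|) {g : ℂ → ℂ}
    (hg : AnalyticOnNhd ℂ g (closedBall c |r|)) (hg₀ : ∀ z ∈ closedBall c |r|, g z ≠ 0) :
    circleAverage (fun z => log ‖(Z.map fun a => z - a).prod * g z‖) c r =
      Multiset.card Z * log r + log ‖g c‖ := by
  rw [circleAverage_log_norm_multiset_prod_sub_mul hZ
      ((hg.mono sphere_subset_closedBall).meromorphicOn)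
      (fun z hz => hg₀ z (sphere_subset_closedBall hz)),
    hg.circleAverage_log_norm_of_ne_zero hg₀]

theorem circle_log_avg_eq_sub_general (k : ℕ) (hk : 2 ≤ k) (f g : ℂ → ℂ) (U : Set ℂ) (hU : IsOpen U)
    (hUb : Metric.closedBall (0:ℂ) (3 ^ k) ⊆ U)
    (Z : Multiset ℂ) (hZ : ∀ a ∈ Z, a ∈ Metric.ball (0:ℂ) 3)
    (hg : DifferentiableOn ℂ g U) (hgne : ∀ z ∈ U, g z ≠ 0)
    (hfact : ∀ z ∈ U, f z = (Z.map (fun a => z - a)).prod * g z)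
    (W : ℕ) (hW : W = Multiset.card Z) :
    circAvg 3 (fun ζ => Real.log ‖f ζ‖) =
      circAvg (3 ^ k) (fun ζ => Real.log ‖f ζ‖)
        - (k - 1 : ℝ) * W * Real.log 3 := by
  have h3k : (3 : ℝ) ≤ 3 ^ k := le_self_pow₀ (by norm_num) (by omega)
  have hradius : ∀ r : ℝ, 3 ≤ r → r ≤ 3 ^ k →
      circAvg r (fun ζ => log ‖f ζ‖) = Multiset.card Z * log r + log ‖g 0‖ := by
    intro r h3r hrk
    have hr : |r| = r := abs_of_pos (by linarith)
    have hball : closedBall (0 : ℂ) |r| ⊆ U :=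
      (closedBall_subset_closedBall (hr.trans_le hrk)).trans hUb
    rw [circAvg_eq_circleAverage, ← circleAverage_log_norm_multiset_prod_sub_mul_of_ne_zero
      (fun a ha => ball_subset_ball (h3r.trans_eq hr.symm) (hZ a ha))
      ((hg.analyticOnNhd hU).mono hball) (fun z hz => hgne z (hball hz))]
    exact circleAverage_congr_sphere fun z hz => by
      simp only [hfact z (hball (sphere_subset_closedBall hz))]
  rw [hradius 3 le_rfl h3k, hradius (3 ^ k) h3k le_rfl, hW, log_pow]
  ring

/-- Lemma 4.3 (second identity): with `f` holomorphic on a neighborhood of the closed disc of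
radius `3^k`, `|f| ≥ 1` on the annulus `3 ≤ |z| ≤ 3^k`, and `W` the number of zeros of `f` in
the open disc of radius 3 (with multiplicity, recorded via the factorization `f = ∏(z-a) * g`
with `g` nonvanishing), one has
`∫_{3𝕋} ln|f| dm = ∫_{3^k 𝕋} ln|f| dm − (k−1) W ln 3`. -/
theorem circle_log_avg_eq_sub (k : ℕ) (hk : 2 ≤ k) (f g : ℂ → ℂ) (U : Set ℂ) (hU : IsOpen U)
    (hUb : Metric.closedBall (0:ℂ) (3 ^ k) ⊆ U)
    (Z : Multiset ℂ) (hZ : ∀ a ∈ Z, a ∈ Metric.ball (0:ℂ) 3)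
    (hg : DifferentiableOn ℂ g U) (hgne : ∀ z ∈ U, g z ≠ 0)
    (hfact : ∀ z ∈ U, f z = (Z.map (fun a => z - a)).prod * g z)
    (hK : ∀ z : ℂ, 3 ≤ ‖z‖ → ‖z‖ ≤ 3 ^ k → 1 ≤ ‖f z‖)
    (W : ℕ) (hW : W = Multiset.card Z) :
    circAvg 3 (fun ζ => Real.log ‖f ζ‖) =
      circAvg (3 ^ k) (fun ζ => Real.log ‖f ζ‖)
        - (k - 1 : ℝ) * W * Real.log 3 :=
  circle_log_avg_eq_sub_general k hk f g U hU hUb Z hZ hg hgne hfact W hW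
end

section
/- Let k ≥ 2 be an integer, λ ∈ ℂ*, and let h(ζ) = Σ_{m>0} a_m ζ^m define a holomorphic function on the unit disc vanishing at 0 (the positive part of a Laurent series convergent on the punctured disc). Then the series χ(ζ) := Σ_{l=0}^∞ λ^{-(l+1)} h(ζ^{k^l}) converges uniformly on compact subsets of the open unit disc and defines a holomorphic function satisfying λχ(ζ) − χ(ζ^k) = h(ζ) for all ζ in the unit disc. -/
/-!
By the Schwarz lemma `‖h ζ‖ ≤ C ‖ζ‖` on every disc `‖ζ‖ ≤ r < 1`, so the `l`-th term of the
series is bounded there by `C ‖λ‖⁻¹ ^ (l + 1) r ^ k ^ l`. These bounds are summable because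
`r ^ k ^ l` decays faster than any geometric sequence, and the Weierstrass M-test gives locally
uniform convergence, hence holomorphy of the limit. The functional equation is the index shift
`(ζ ^ k) ^ k ^ l = ζ ^ k ^ (l + 1)`.
-/

open Metric Filter Set

theorem exists_norm_le_mul_norm_of_differentiableOn_ball {E F : Type*}
    [NormedAddCommGroup E] [NormedSpace ℂ E] [ProperSpace E]
    [NormedAddCommGroup F] [NormedSpace ℂ F] {f : E → F} {r R : ℝ}
    (hf : DifferentiableOn ℂ f (ball 0 R)) (hf0 : f 0 = 0) (hr : r < R) :
    ∃ C ≥ 0, ∀ z ∈ closedBall (0 : E) r, ‖f z‖ ≤ C * ‖z‖ := by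
  obtain ⟨R', hrR', hR'R⟩ := exists_between hr
  obtain ⟨M, hM⟩ := (isCompact_closedBall (0 : E) R').exists_bound_of_continuousOn
    (hf.continuousOn.mono (closedBall_subset_ball hR'R))
  have hmaps : MapsTo f (ball 0 R') (closedBall (f 0) M) := fun z hz => by
    simpa [hf0] using hM z (ball_subset_closedBall hz)
  refine ⟨max (M / R') 0, le_max_right _ _, fun z hz => ?_⟩
  have hzR' : z ∈ ball (0 : E) R' := closedBall_subset_ball hrR' hz
  calc ‖f z‖ ≤ M / R' * ‖z‖ := by
        simpa [hf0] using Complex.dist_le_div_mul_dist_of_mapsTo_ball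
          (hf.mono (ball_subset_ball hR'R.le)) hmaps hzR'
    _ ≤ max (M / R') 0 * ‖z‖ := by gcongr; exact le_max_left _ _

theorem summable_pow_mul_pow_pow {k : ℕ} (hk : 1 < k) (A : ℝ) {r : ℝ} (hr0 : 0 ≤ r)
    (hr1 : r < 1) : Summable fun l : ℕ => A ^ l * r ^ k ^ l := by
  have hdecay : Tendsto (fun l : ℕ => |A| * r ^ k ^ l) atTop (nhds 0) := by
    simpa using ((tendsto_pow_atTop_nhds_zero_of_lt_one hr0 hr1).comp
      (tendsto_pow_atTop_atTop_of_one_lt hk)).const_mul |A|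
  refine summable_of_ratio_norm_eventually_le (by norm_num : (1 : ℝ) / 2 < 1) ?_
  filter_upwards [hdecay.eventually_le_const (by norm_num : (0 : ℝ) < 1 / 2)] with l hl
  have hsq : r ^ k ^ (l + 1) ≤ (r ^ k ^ l) ^ 2 := by
    rw [pow_succ, pow_mul]
    exact pow_le_pow_of_le_one (by positivity) (pow_le_one₀ hr0 hr1.le) hk
  calc ‖A ^ (l + 1) * r ^ k ^ (l + 1)‖ = |A| ^ l * |A| * r ^ k ^ (l + 1) := by
        rw [norm_mul, norm_pow, Real.norm_eq_abs, Real.norm_of_nonneg (by positivity), pow_succ]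
    _ ≤ |A| ^ l * |A| * (r ^ k ^ l) ^ 2 := by gcongr
    _ = (|A| * r ^ k ^ l) * ‖A ^ l * r ^ k ^ l‖ := by
        rw [norm_mul, norm_pow, Real.norm_eq_abs, Real.norm_of_nonneg (by positivity)]; ring
    _ ≤ 1 / 2 * ‖A ^ l * r ^ k ^ l‖ := by gcongr

section Series

variable {h : ℂ → ℂ} {k : ℕ} (lam : ℂ)

theorem exists_summable_bound_inv_pow_mul_comp_pow
    (hh : DifferentiableOn ℂ h (ball 0 1)) (h0 : h 0 = 0) (hk : 1 < k) {r : ℝ} (hr0 : 0 ≤ r)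
    (hr1 : r < 1) :
    ∃ u : ℕ → ℝ, Summable u ∧
      ∀ l, ∀ ζ ∈ closedBall (0 : ℂ) r, ‖lam⁻¹ ^ (l + 1) * h (ζ ^ k ^ l)‖ ≤ u l := by
  obtain ⟨C, hC0, hC⟩ := exists_norm_le_mul_norm_of_differentiableOn_ball hh h0 hr1
  refine ⟨fun l => ‖lam⁻¹‖ * C * (‖lam⁻¹‖ ^ l * r ^ k ^ l),
    ((summable_pow_mul_pow_pow hk _ hr0 hr1).mul_left _), fun l ζ hζ => ?_⟩
  rw [mem_closedBall_zero_iff] at hζ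
  have hpow : ‖ζ ^ k ^ l‖ ≤ ‖ζ‖ := by
    rw [norm_pow]
    exact pow_le_of_le_one (norm_nonneg _) (by linarith) (by positivity)
  calc ‖lam⁻¹ ^ (l + 1) * h (ζ ^ k ^ l)‖ ≤ ‖lam⁻¹‖ ^ (l + 1) * (C * ‖ζ ^ k ^ l‖) := by
        rw [norm_mul, norm_pow]
        gcongr
        exact hC _ (mem_closedBall_zero_iff.2 (hpow.trans hζ))
    _ ≤ ‖lam⁻¹‖ ^ (l + 1) * (C * r ^ k ^ l) := by
        rw [norm_pow]; gcongr
    _ = ‖lam⁻¹‖ * C * (‖lam⁻¹‖ ^ l * r ^ k ^ l) := by ring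

theorem tendstoUniformlyOn_sum_inv_pow_mul_comp_pow
    (hh : DifferentiableOn ℂ h (ball 0 1)) (h0 : h 0 = 0) (hk : 1 < k) {K : Set ℂ}
    (hK : K ⊆ ball 0 1) (hKc : IsCompact K) :
    TendstoUniformlyOn (fun n ζ => ∑ l ∈ Finset.range n, lam⁻¹ ^ (l + 1) * h (ζ ^ k ^ l))
      (fun ζ => ∑' l : ℕ, lam⁻¹ ^ (l + 1) * h (ζ ^ k ^ l)) atTop K := by
  obtain ⟨r, ⟨hr0, hr1⟩, hKr⟩ := exists_pos_lt_subset_ball one_pos hKc.isClosed hK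
  obtain ⟨u, hu, hbound⟩ :=
    exists_summable_bound_inv_pow_mul_comp_pow lam hh h0 hk hr0.le hr1
  exact tendstoUniformlyOn_tsum_nat hu fun l ζ hζ =>
    hbound l ζ (ball_subset_closedBall (hKr hζ))

end Series

theorem mul_tsum_inv_pow_mul_sub_tsum_shift {𝕜 : Type*} [Field 𝕜] [TopologicalSpace 𝕜]
    [IsTopologicalRing 𝕜] [T2Space 𝕜] {lam : 𝕜} (hlam : lam ≠ 0) {g : ℕ → 𝕜}
    (hg : Summable fun l => lam⁻¹ ^ (l + 1) * g l) :
    lam * ∑' l, lam⁻¹ ^ (l + 1) * g l - ∑' l, lam⁻¹ ^ (l + 1) * g (l + 1) = g 0 := by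
  have hshift : ∑' l, lam⁻¹ ^ (l + 1) * g (l + 1) =
      lam * ∑' l, lam⁻¹ ^ (l + 1 + 1) * g (l + 1) := by
    rw [← tsum_mul_left]
    congr 1 with l
    rw [pow_succ _ (l + 1)]
    field_simp
  rw [hshift, hg.tsum_eq_zero_add, mul_add, add_sub_cancel_right, zero_add, pow_one,
    ← mul_assoc, mul_inv_cancel₀ hlam, one_mul]

/-- Functional-equation lemma (Section 4): for `k ≥ 2`, `λ ≠ 0` and `h` holomorphic on the
unit disc with `h(0) = 0`, the series `χ(ζ) = Σ_{l≥0} λ^{-(l+1)} h(ζ^{k^l})` converges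
uniformly on compact subsets of the unit disc, defines a holomorphic function there, and
satisfies `λ χ(ζ) − χ(ζ^k) = h(ζ)` for all `ζ` in the unit disc. -/
theorem chi_series_converges_and_solves (k : ℕ) (hk : 2 ≤ k) (lam : ℂ) (hlam : lam ≠ 0)
    (h : ℂ → ℂ) (hh : DifferentiableOn ℂ h (Metric.ball (0:ℂ) 1)) (h0 : h 0 = 0) :
    (∀ K : Set ℂ, K ⊆ Metric.ball (0:ℂ) 1 → IsCompact K →
      TendstoUniformlyOn
        (fun n ζ => ∑ l ∈ Finset.range n, lam⁻¹ ^ (l + 1) * h (ζ ^ k ^ l))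
        (fun ζ => ∑' l : ℕ, lam⁻¹ ^ (l + 1) * h (ζ ^ k ^ l)) Filter.atTop K) ∧
    (∀ ζ ∈ Metric.ball (0:ℂ) 1,
      lam * (∑' l : ℕ, lam⁻¹ ^ (l + 1) * h (ζ ^ k ^ l))
        - (∑' l : ℕ, lam⁻¹ ^ (l + 1) * h ((ζ ^ k) ^ k ^ l)) = h ζ) ∧
    DifferentiableOn ℂ (fun ζ => ∑' l : ℕ, lam⁻¹ ^ (l + 1) * h (ζ ^ k ^ l))
      (Metric.ball (0:ℂ) 1) := by
  have hconv : ∀ K ⊆ ball (0 : ℂ) 1, IsCompact K → TendstoUniformlyOn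
      (fun n ζ => ∑ l ∈ Finset.range n, lam⁻¹ ^ (l + 1) * h (ζ ^ k ^ l))
      (fun ζ => ∑' l : ℕ, lam⁻¹ ^ (l + 1) * h (ζ ^ k ^ l)) atTop K :=
    fun K hK hKc => tendstoUniformlyOn_sum_inv_pow_mul_comp_pow lam hh h0 hk hK hKc
  refine ⟨hconv, fun ζ hζ => ?_, ?_⟩
  · obtain ⟨u, hu, hbound⟩ := exists_summable_bound_inv_pow_mul_comp_pow lam hh h0 hk
      (norm_nonneg ζ) (mem_ball_zero_iff.1 hζ)
    have hsum : Summable fun l => lam⁻¹ ^ (l + 1) * h (ζ ^ k ^ l) :=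
      .of_norm_bounded hu fun l => hbound l ζ (mem_closedBall_zero_iff.2 le_rfl)
    simp_rw [← pow_mul, ← pow_succ']
    simpa using mul_tsum_inv_pow_mul_sub_tsum_shift hlam hsum
  · have hloc := (tendstoLocallyUniformlyOn_iff_forall_isCompact isOpen_ball).2 hconv
    refine hloc.differentiableOn (Eventually.of_forall fun n => ?_) isOpen_ball
    refine DifferentiableOn.fun_sum fun l _ => (hh.comp (differentiableOn_pow _) ?_).const_mul _
    intro z hz
    rw [mem_ball_zero_iff] at hz ⊢
    simpa using pow_lt_one₀ (norm_nonneg z) hz (by positivity : k ^ l ≠ 0)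
end

section
/- Let k ≥ 2 be an integer and λ ∈ ℂ \ {0}. Suppose χ(ζ) = Σ_{m<0} b_m ζ^m and ψ(ζ) := λχ(ζ) − χ(ζ^k) = Σ_{m<0} c_m ζ^m are Laurent series (with only negative-index terms) both converging for all ζ ≠ 0 (i.e. defining holomorphic functions on ℂ \ {0} vanishing at ∞). If every nonzero coefficient c_m of ψ has index m not divisible by k, then ψ is identically zero. -/
/-!
Comparing Laurent coefficients of `ψ = λχ - χ(ζ^k)` (coefficients are unique, by reduction to
power series in `1/ζ`) gives `c_{kr} = λ b_{kr} - b_r`, so the hypothesis on `c` yields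
`b_r = λ b_{kr}` and hence `b_m = λⁿ b_{kⁿm}`. Convergence of `χ` at a point `ζ` with
`|λ ζ| < 1` bounds `|b_j|` by `C |ζ|^{-j}`; since `kⁿ|m| ≥ n`, this gives
`|b_m| ≤ C |λ ζ|ⁿ → 0`. Thus `χ = 0`, and so `ψ = 0`.
-/

open Filter Topology FormalMultilinearSeries

variable {𝕜 : Type*} [NontriviallyNormedField 𝕜]

theorem coeff_eq_zero_of_eventually_hasSum_zero [CompleteSpace 𝕜] {d : ℕ → 𝕜}
    (h : ∀ᶠ w in 𝓝[≠] (0 : 𝕜), HasSum (fun n => d n * w ^ n) 0) (n : ℕ) : d n = 0 := by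
  set p := ofScalars 𝕜 d
  obtain ⟨w₀, hw₀, hw₀ne⟩ := (h.and self_mem_nhdsWithin).exists
  have hradius : 0 < p.radius := by
    refine lt_of_lt_of_le (by simpa using hw₀ne) (p.le_radius_of_tendsto (l := 0) (r := ‖w₀‖₊) ?_)
    simpa [p, ofScalars_norm] using hw₀.summable.tendsto_atTop_zero.norm
  have hsum : HasFPowerSeriesAt p.sum p 0 := (p.hasFPowerSeriesOnBall hradius).hasFPowerSeriesAt
  have hzero : ∀ᶠ w in 𝓝[≠] (0 : 𝕜), p.sum w = 0 := h.mono fun w hw => by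
    simpa [FormalMultilinearSeries.sum, p, ofScalars_apply_eq, mul_comm] using hw.tsum_eq
  have hp : p = 0 := by
    by_contra hp
    exact ((hsum.locally_ne_zero hp).and hzero).exists.elim fun _ hw => hw.1 hw.2
  simpa [p] using congrFun hp n

theorem laurent_coeff_eq_zero_of_hasSum_zero [CompleteSpace 𝕜] {a : ℤ → 𝕜}
    (ha : ∀ m, 0 < m → a m = 0) (h : ∀ ζ : 𝕜, ζ ≠ 0 → HasSum (fun m => a m * ζ ^ m) 0)
    (m : ℤ) : a m = 0 := by
  rcases lt_or_ge 0 m with hm | hm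
  · exact ha m hm
  have hneg : Function.Injective fun n : ℕ => -(n : ℤ) := fun p q hpq => by simpa using hpq
  have hpow : ∀ᶠ w in 𝓝[≠] (0 : 𝕜), HasSum (fun n : ℕ => a (-n) * w ^ n) 0 := by
    refine eventually_mem_nhdsWithin.mono fun w hw => ?_
    have hoff : ∀ m ∉ Set.range fun n : ℕ => -(n : ℤ), a m * w⁻¹ ^ m = 0 := fun m hm => by
      rw [ha m (by contrapose! hm; exact ⟨m.natAbs, by simp only; omega⟩), zero_mul]
    simpa [Function.comp_def] using (hneg.hasSum_iff hoff).mpr (h _ (inv_ne_zero hw))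
  simpa [Int.ofNat_natAbs_of_nonpos hm] using
    coeff_eq_zero_of_eventually_hasSum_zero hpow m.natAbs

noncomputable def dilate {α : Type*} [Zero α] (k : ℕ) (b : ℤ → α) : ℤ → α :=
  Function.extend ((k : ℤ) * ·) b 0

theorem dilate_mul {α : Type*} [Zero α] {k : ℕ} (hk : k ≠ 0) (b : ℤ → α) (r : ℤ) :
    dilate k b (k * r) = b r :=
  (mul_right_injective₀ (by exact_mod_cast hk)).extend_apply _ _ _

theorem dilate_eq_zero_of_pos {α : Type*} [Zero α] {k : ℕ} {b : ℤ → α}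
    (hb : ∀ r, 0 < r → b r = 0) {m : ℤ} (hm : 0 < m) : dilate k b m = 0 := by
  classical
  rw [dilate, Function.extend_def]
  split_ifs with hmk
  · exact hb _ (pos_of_mul_pos_right (hmk.choose_spec ▸ hm) (by positivity))
  · rfl

theorem hasSum_dilate_mul_zpow_iff {b : ℤ → 𝕜} {k : ℕ} (hk : k ≠ 0) {ζ s : 𝕜} :
    HasSum (fun m => dilate k b m * ζ ^ m) s ↔ HasSum (fun r => b r * (ζ ^ k) ^ r) s := by
  have hinj : Function.Injective ((k : ℤ) * ·) := mul_right_injective₀ (by exact_mod_cast hk)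
  have hoff : ∀ m ∉ Set.range ((k : ℤ) * ·), dilate k b m * ζ ^ m = 0 := fun m hm => by
    rw [dilate, Function.extend_apply' _ _ _ (by simpa using hm), Pi.zero_apply, zero_mul]
  rw [← hinj.hasSum_iff hoff]
  simp [Function.comp_def, dilate_mul hk, zpow_mul]

theorem eq_pow_mul_of_eq_mul {M : Type*} [Monoid M] {b : ℤ → M} {lam : M} {k : ℤ}
    (hrec : ∀ r, b r = lam * b (k * r)) (m : ℤ) (n : ℕ) : b m = lam ^ n * b (k ^ n * m) := by
  induction n with
  | zero => simp
  | succ n ih => rw [ih, hrec, pow_succ, pow_succ, mul_assoc, mul_assoc, mul_left_comm k]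

theorem exists_norm_mul_zpow_le {b : ℤ → 𝕜} {ζ : 𝕜} (hs : Summable fun m => b m * ζ ^ m) :
    ∃ C, ∀ m, ‖b m‖ * ‖ζ‖ ^ m ≤ C := by
  obtain ⟨C, hC⟩ := hs.tendsto_cofinite_zero.norm.bddAbove_range_of_cofinite
  exact ⟨C, fun m => by simpa using hC (Set.mem_range_self m)⟩

theorem eq_zero_of_eq_mul_of_summable {b : ℤ → 𝕜} {lam : 𝕜} {k : ℕ} (hk : 2 ≤ k)
    (hrec : ∀ r, b r = lam * b (k * r)) (hsum : ∀ ζ : 𝕜, ζ ≠ 0 → Summable fun m => b m * ζ ^ m)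
    {m : ℤ} (hm : m < 0) : b m = 0 := by
  obtain ⟨ζ, hζ0, hζ⟩ :=
    NormedField.exists_norm_lt 𝕜 (inv_pos.mpr (by positivity : 0 < ‖lam‖ + 1))
  set t := ‖ζ‖
  have ht1 : t ≤ 1 := hζ.le.trans (inv_le_one_of_one_le₀ (by simp))
  have hq : ‖lam‖ * t < 1 := by
    calc ‖lam‖ * t ≤ (‖lam‖ + 1) * t := by gcongr; simp
      _ < (‖lam‖ + 1) * (‖lam‖ + 1)⁻¹ := by gcongr
      _ = 1 := mul_inv_cancel₀ (by positivity)
  obtain ⟨C, hC⟩ := exists_norm_mul_zpow_le (hsum ζ (norm_pos_iff.mp hζ0))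
  have hbound : ∀ n : ℕ, ‖b m‖ ≤ C * (‖lam‖ * t) ^ n := fun n => by
    have hexp : (n : ℤ) ≤ -((k : ℤ) ^ n * m) := by
      have : (n : ℤ) < (k : ℤ) ^ n := by exact_mod_cast Nat.lt_pow_self (by omega : 1 < k)
      nlinarith
    have hC' : ‖b ((k : ℤ) ^ n * m)‖ ≤ C * t ^ n := by
      calc ‖b ((k : ℤ) ^ n * m)‖
          = ‖b ((k : ℤ) ^ n * m)‖ * t ^ ((k : ℤ) ^ n * m) * t ^ (-((k : ℤ) ^ n * m)) := by
            rw [mul_assoc, ← zpow_add₀ hζ0.ne', add_neg_cancel, zpow_zero, mul_one]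
        _ ≤ C * t ^ (n : ℤ) :=
            mul_le_mul (hC _) (zpow_le_zpow_right_of_le_one₀ hζ0 ht1 hexp) (by positivity)
              ((hC 0).trans' (by positivity))
        _ = C * t ^ n := by rw [zpow_natCast]
    calc ‖b m‖ = ‖lam‖ ^ n * ‖b ((k : ℤ) ^ n * m)‖ := by
          rw [eq_pow_mul_of_eq_mul hrec m n, norm_mul, norm_pow]
      _ ≤ ‖lam‖ ^ n * (C * t ^ n) := by gcongr
      _ = C * (‖lam‖ * t) ^ n := by ring
  have hlim : Tendsto (fun n : ℕ => C * (‖lam‖ * t) ^ n) atTop (𝓝 0) := by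
    simpa using (tendsto_pow_atTop_nhds_zero_of_lt_one (by positivity) hq).const_mul C
  exact norm_le_zero_iff.mp (ge_of_tendsto' hlim hbound)

theorem normal_form_unique_general (k : ℕ) (hk : 2 ≤ k) (lam : ℂ)
    (b c : ℤ → ℂ) (hbneg : ∀ m : ℤ, 0 ≤ m → b m = 0) (hcneg : ∀ m : ℤ, 0 ≤ m → c m = 0)
    (χ ψ : ℂ → ℂ)
    (hχ : ∀ ζ : ℂ, ζ ≠ 0 → HasSum (fun m : ℤ => b m * ζ ^ m) (χ ζ))
    (hψ : ∀ ζ : ℂ, ζ ≠ 0 → HasSum (fun m : ℤ => c m * ζ ^ m) (ψ ζ))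
    (heq : ∀ ζ : ℂ, ζ ≠ 0 → ψ ζ = lam * χ ζ - χ (ζ ^ k))
    (hc : ∀ m : ℤ, c m ≠ 0 → ¬ ((k:ℤ) ∣ m)) :
    ∀ ζ : ℂ, ζ ≠ 0 → ψ ζ = 0 := by
  have hk0 : k ≠ 0 := by omega
  have hcoeff : ∀ m, lam * b m - dilate k b m - c m = 0 := by
    refine laurent_coeff_eq_zero_of_hasSum_zero (fun m hm => ?_) fun ζ hζ => ?_
    · rw [hbneg m hm.le, dilate_eq_zero_of_pos (fun r hr => hbneg r hr.le) hm, hcneg m hm.le]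
      ring
    have hsum := (((hχ ζ hζ).mul_left lam).sub
      ((hasSum_dilate_mul_zpow_iff hk0).mpr (hχ _ (pow_ne_zero k hζ)))).sub (hψ ζ hζ)
    rw [← heq ζ hζ, sub_self] at hsum
    simpa only [sub_mul, mul_assoc] using hsum
  have hrec : ∀ r, b r = lam * b (k * r) := fun r => by
    have hcr : c (k * r) = 0 := not_not.mp fun h => hc _ h ⟨r, rfl⟩
    simpa only [dilate_mul hk0, hcr, sub_zero, sub_eq_zero, eq_comm] using hcoeff (k * r)
  have hb : ∀ m, b m = 0 := fun m => (lt_or_ge m 0).elim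
    (eq_zero_of_eq_mul_of_summable hk hrec fun ζ hζ => (hχ ζ hζ).summable) (hbneg m)
  have hχ0 : ∀ ζ, ζ ≠ 0 → χ ζ = 0 := fun ζ hζ =>
    (hχ ζ hζ).unique (by simp only [hb, zero_mul]; exact hasSum_zero)
  intro ζ hζ
  rw [heq ζ hζ, hχ0 ζ hζ, hχ0 _ (pow_ne_zero k hζ), mul_zero, sub_zero]

/-- Normal-form uniqueness (Section 4): let `χ(ζ) = Σ_{m<0} b_m ζ^m` and
`ψ(ζ) = λχ(ζ) − χ(ζ^k) = Σ_{m<0} c_m ζ^m` be Laurent series with only negative-index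
terms, both converging on all of `ℂ \ {0}`. If every nonzero coefficient `c_m` has index
`m` not divisible by `k`, then `ψ` is identically zero. -/
theorem normal_form_unique (k : ℕ) (hk : 2 ≤ k) (lam : ℂ) (hlam : lam ≠ 0)
    (b c : ℤ → ℂ) (hbneg : ∀ m : ℤ, 0 ≤ m → b m = 0) (hcneg : ∀ m : ℤ, 0 ≤ m → c m = 0)
    (χ ψ : ℂ → ℂ)
    (hχ : ∀ ζ : ℂ, ζ ≠ 0 → HasSum (fun m : ℤ => b m * ζ ^ m) (χ ζ))
    (hψ : ∀ ζ : ℂ, ζ ≠ 0 → HasSum (fun m : ℤ => c m * ζ ^ m) (ψ ζ))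
    (heq : ∀ ζ : ℂ, ζ ≠ 0 → ψ ζ = lam * χ ζ - χ (ζ ^ k))
    (hc : ∀ m : ℤ, c m ≠ 0 → ¬ ((k:ℤ) ∣ m)) :
    ∀ ζ : ℂ, ζ ≠ 0 → ψ ζ = 0 :=
  normal_form_unique_general k hk lam b c hbneg hcneg χ ψ hχ hψ heq hc
end

section
/- Let h(ζ) = Σ_{m<0} a_m ζ^m be a Laurent series defining a holomorphic function on ℂ \ {0} with h(∞) = 0, and let k ≥ 2 be an integer. For l ≥ 1 define h_l(ζ) = Σ_{m<0, k^l | m} a_m ζ^m and write h_l(ζ) = f_l(ζ^{k^l}). Then for every 0 < R < 1 and every l ≥ 1, one has sup_{|ζ| ≥ R} |f_l(ζ)| ≤ R^{k^l − 1} · Σ_{m≤0} |a_m| R^m, and consequently for any λ ∈ ℂ* the series Σ_{l≥1} λ^{l−1} f_l converges uniformly on compact subsets of ℂ \ {0}. -/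
/-!
For `‖ξ‖ ≥ R` and `R ≤ 1`, the term `a (-(j+1) q) ξ ^ (-(j+1))` of the `q = k ^ l` piece is at most
`R ^ (q - 1)` times the term `‖a m‖ R ^ m`, `m = -(j+1) q`, of the majorant series, because
`R ^ (-(j+1)) ≤ R ^ (q - 1) R ^ (-(j+1) q)`; summing over the injective reindexing `j ↦ (j+1) q`
gives the bound. On a compact set avoiding `0` pick `R` below the minimum of `‖ξ‖` with
`‖λ‖ R < 1`: as `k ^ (l+1) - 1 ≥ l + 1`, the bounds `‖λ‖ ^ l R ^ (k ^ (l+1) - 1)` are dominated by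
a geometric series and the Weierstrass M-test applies.
-/

open Filter Topology

lemma zpow_neg_le_zpow_sub_one_mul_zpow {R : ℝ} (hR0 : 0 < R) (hR1 : R ≤ 1) {n q : ℤ}
    (hn : 1 ≤ n) (hq : 1 ≤ q) : R ^ (-n) ≤ R ^ (q - 1) * R ^ (-n * q) := by
  rw [← zpow_add₀ hR0.ne']
  exact zpow_le_zpow_right_of_le_one₀ hR0 hR1 (by nlinarith)

lemma zpow_neg_le_zpow_neg {R x : ℝ} (hR0 : 0 < R) (hRx : R ≤ x) {n : ℤ} (hn : 0 ≤ n) :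
    x ^ (-n) ≤ R ^ (-n) := by
  rw [zpow_neg, zpow_neg]
  exact inv_anti₀ (zpow_pos hR0 n) (zpow_le_zpow_left₀ hn hR0.le hRx)

theorem norm_le_of_hasSum_laurentPiece {𝕜 : Type*} [NormedDivisionRing 𝕜] {a : ℤ → 𝕜}
    {q : ℕ} (hq : 0 < q) {R : ℝ} (hR0 : 0 < R) (hR1 : R ≤ 1)
    (habs : Summable fun m : ℕ => ‖a (-(m : ℤ))‖ * R ^ (-(m : ℤ))) {ξ f : 𝕜}
    (hf : HasSum (fun j : ℕ => a (-((j : ℤ) + 1) * q) * ξ ^ (-((j : ℤ) + 1))) f)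
    (hξ : R ≤ ‖ξ‖) :
    ‖f‖ ≤ R ^ ((q : ℤ) - 1) * ∑' m : ℕ, ‖a (-(m : ℤ))‖ * R ^ (-(m : ℤ)) := by
  set g : ℕ → ℝ := fun m => ‖a (-(m : ℤ))‖ * R ^ (-(m : ℤ))
  set i : ℕ → ℕ := fun j => (j + 1) * q
  have hi : Function.Injective i := fun j₁ j₂ h => by
    simpa using Nat.eq_of_mul_eq_mul_right hq h
  have hterm (j : ℕ) : ‖a (-((j : ℤ) + 1) * q) * ξ ^ (-((j : ℤ) + 1))‖ ≤
      R ^ ((q : ℤ) - 1) * g (i j) := by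
    have hcast : -((i j : ℕ) : ℤ) = -((j : ℤ) + 1) * q := by push_cast [i]; ring
    simp only [g, hcast, norm_mul, norm_zpow]
    calc ‖a (-((j : ℤ) + 1) * q)‖ * ‖ξ‖ ^ (-((j : ℤ) + 1))
        ≤ ‖a (-((j : ℤ) + 1) * q)‖ * R ^ (-((j : ℤ) + 1)) := by
          gcongr
          exact zpow_neg_le_zpow_neg hR0 hξ (by positivity)
      _ ≤ ‖a (-((j : ℤ) + 1) * q)‖ * (R ^ ((q : ℤ) - 1) * R ^ (-((j : ℤ) + 1) * q)) := by
          gcongr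
          exact zpow_neg_le_zpow_sub_one_mul_zpow hR0 hR1 (by omega) (by omega)
      _ = R ^ ((q : ℤ) - 1) * (‖a (-((j : ℤ) + 1) * q)‖ * R ^ (-((j : ℤ) + 1) * q)) := by ring
  have hg_nonneg (m : ℕ) : 0 ≤ g m := by positivity
  calc ‖f‖ ≤ R ^ ((q : ℤ) - 1) * ∑' j, g (i j) := by
        rw [← hf.tsum_eq]
        exact tsum_of_norm_bounded ((habs.comp_injective hi).hasSum.mul_left _) hterm
    _ ≤ R ^ ((q : ℤ) - 1) * ∑' m, g m :=
        mul_le_mul_of_nonneg_left (tsum_comp_le_tsum_of_inj habs hg_nonneg hi)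
          (by positivity)

theorem summable_pow_mul_zpow_pow_sub_one {k : ℕ} (hk : 2 ≤ k) {c R : ℝ} (hc : 0 ≤ c)
    (hR0 : 0 < R) (hR1 : R ≤ 1) (hcR : c * R < 1) :
    Summable fun l : ℕ => c ^ l * R ^ ((k : ℤ) ^ (l + 1) - 1) := by
  refine .of_nonneg_of_le (fun l => by positivity) (fun l => ?_)
    ((summable_geometric_of_lt_one (by positivity) hcR).mul_left R)
  have hexp : ((l + 1 : ℕ) : ℤ) ≤ (k : ℤ) ^ (l + 1) - 1 := by
    have : ((l + 1 : ℕ) : ℤ) < (k : ℤ) ^ (l + 1) := by exact_mod_cast Nat.lt_pow_self (by omega)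
    omega
  calc c ^ l * R ^ ((k : ℤ) ^ (l + 1) - 1) ≤ c ^ l * R ^ ((l + 1 : ℕ) : ℤ) :=
        mul_le_mul_of_nonneg_left (zpow_le_zpow_right_of_le_one₀ hR0 hR1 hexp)
          (by positivity)
    _ = R * (c * R) ^ l := by rw [zpow_natCast, mul_pow, pow_succ]; ring

theorem IsCompact.exists_pos_forall_le_norm {E : Type*} [SeminormedAddCommGroup E] {K : Set E}
    (hK : IsCompact K) (hK0 : ∀ x ∈ K, 0 < ‖x‖) : ∃ r > 0, ∀ x ∈ K, r ≤ ‖x‖ :=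
  hK.exists_forall_le' continuous_norm.continuousOn hK0

theorem exists_pos_lt_one_le_mul_lt_one {r : ℝ} (hr : 0 < r) (c : ℝ) :
    ∃ R : ℝ, 0 < R ∧ R < 1 ∧ R ≤ r ∧ c * R < 1 := by
  have hcR : ∀ᶠ R in 𝓝 (0 : ℝ), c * R < 1 :=
    (continuous_const.mul continuous_id).tendsto' 0 0 (by simp) |>.eventually (gt_mem_nhds one_pos)
  have hsmall := (eventually_lt_nhds one_pos).and ((eventually_le_nhds hr).and hcR)
  exact ((eventually_mem_nhdsWithin (s := Set.Ioi (0 : ℝ)) (a := 0)).and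
    (nhdsWithin_le_nhds hsmall)).exists

theorem laurent_piece_estimate_general (k : ℕ) (hk : 2 ≤ k) (a : ℤ → ℂ)
    (habs : ∀ R : ℝ, 0 < R → Summable (fun m : ℕ => ‖a (-(m:ℤ))‖ * R ^ (-(m:ℤ))))
    (fl : ℕ → ℂ → ℂ)
    (hfl : ∀ l : ℕ, 1 ≤ l → ∀ ξ : ℂ, ξ ≠ 0 →
      HasSum (fun j : ℕ => a (-((j:ℤ) + 1) * (k:ℤ) ^ l) * ξ ^ (-((j:ℤ) + 1))) (fl l ξ)) :
    (∀ R : ℝ, 0 < R → R < 1 → ∀ l : ℕ, 1 ≤ l → ∀ ξ : ℂ, R ≤ ‖ξ‖ →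
      ‖fl l ξ‖ ≤
        R ^ ((k:ℤ) ^ l - 1) * ∑' m : ℕ, ‖a (-(m:ℤ))‖ * R ^ (-(m:ℤ))) ∧
    (∀ lam : ℂ, lam ≠ 0 → ∀ K : Set ℂ, IsCompact K → (0:ℂ) ∉ K →
      TendstoUniformlyOn
        (fun n ξ => ∑ l ∈ Finset.range n, lam ^ l * fl (l + 1) ξ)
        (fun ξ => ∑' l : ℕ, lam ^ l * fl (l + 1) ξ) Filter.atTop K) := by
  have hpiece : ∀ R : ℝ, 0 < R → R < 1 → ∀ l : ℕ, 1 ≤ l → ∀ ξ : ℂ, R ≤ ‖ξ‖ →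
      ‖fl l ξ‖ ≤ R ^ ((k:ℤ) ^ l - 1) * ∑' m : ℕ, ‖a (-(m:ℤ))‖ * R ^ (-(m:ℤ)) := by
    intro R hR0 hR1 l hl ξ hξ
    have hξ0 : ξ ≠ 0 := norm_pos_iff.mp (hR0.trans_le hξ)
    exact_mod_cast norm_le_of_hasSum_laurentPiece (q := k ^ l) (by positivity) hR0 hR1.le
      (habs R hR0) (by exact_mod_cast hfl l hl ξ hξ0) hξ
  refine ⟨hpiece, fun lam _ K hK hK0 => ?_⟩
  obtain ⟨r, hr0, hrK⟩ := hK.exists_pos_forall_le_norm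
    fun ξ hξ => norm_pos_iff.mpr (ne_of_mem_of_not_mem hξ hK0)
  obtain ⟨R, hR0, hR1, hRr, hcR⟩ := exists_pos_lt_one_le_mul_lt_one hr0 ‖lam‖
  refine tendstoUniformlyOn_tsum_nat ((summable_pow_mul_zpow_pow_sub_one hk (norm_nonneg lam)
    hR0 hR1.le hcR).mul_right (∑' m : ℕ, ‖a (-(m:ℤ))‖ * R ^ (-(m:ℤ)))) fun l ξ hξ => ?_
  rw [norm_mul, norm_pow, mul_assoc]
  gcongr
  exact hpiece R hR0 hR1 (l + 1) (by omega) ξ (hRr.trans (hrK ξ hξ))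

/-- Estimate for the pieces `f_l` of a Laurent series (Section 4): with
`h(ζ) = Σ_{m<0} a_m ζ^m` convergent on `ℂ \ {0}`, `h_l(ζ) = Σ_{m<0, k^l ∣ m} a_m ζ^m`
and `h_l(ζ) = f_l(ζ^{k^l})`, one has for `0 < R < 1`, `l ≥ 1` and `|ξ| ≥ R` the bound
`|f_l(ξ)| ≤ R^{k^l − 1} Σ_{m≤0} |a_m| R^m`; consequently for any `λ ≠ 0` the series
`Σ_{l≥1} λ^{l−1} f_l` converges uniformly on compact subsets of `ℂ \ {0}`. -/
theorem laurent_piece_estimate (k : ℕ) (hk : 2 ≤ k) (a : ℤ → ℂ)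
    (hneg : ∀ m : ℤ, 0 ≤ m → a m = 0)
    (h : ℂ → ℂ) (hh : ∀ ζ : ℂ, ζ ≠ 0 → HasSum (fun m : ℤ => a m * ζ ^ m) (h ζ))
    (habs : ∀ R : ℝ, 0 < R → Summable (fun m : ℕ => ‖a (-(m:ℤ))‖ * R ^ (-(m:ℤ))))
    (fl : ℕ → ℂ → ℂ)
    (hfl : ∀ l : ℕ, 1 ≤ l → ∀ ξ : ℂ, ξ ≠ 0 →
      HasSum (fun j : ℕ => a (-((j:ℤ) + 1) * (k:ℤ) ^ l) * ξ ^ (-((j:ℤ) + 1))) (fl l ξ)) :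
    (∀ R : ℝ, 0 < R → R < 1 → ∀ l : ℕ, 1 ≤ l → ∀ ξ : ℂ, R ≤ ‖ξ‖ →
      ‖fl l ξ‖ ≤
        R ^ ((k:ℤ) ^ l - 1) * ∑' m : ℕ, ‖a (-(m:ℤ))‖ * R ^ (-(m:ℤ))) ∧
    (∀ lam : ℂ, lam ≠ 0 → ∀ K : Set ℂ, IsCompact K → (0:ℂ) ∉ K →
      TendstoUniformlyOn
        (fun n ξ => ∑ l ∈ Finset.range n, lam ^ l * fl (l + 1) ξ)
        (fun ξ => ∑' l : ℕ, lam ^ l * fl (l + 1) ξ) Filter.atTop K) :=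
  laurent_piece_estimate_general k hk a habs fl hfl
end

section
/- Let k ≥ 2 be an integer, λ ∈ ℂ*, and let P(ξ) = Σ_{m=1}^{N} c_m ξ^m be a polynomial with gcd({k} ∪ {m : c_m ≠ 0}) = 1, where N = l'(k−1) for some positive integer l'. Then the germ f(ξ, z) = (ξ^k, λ ξ^{l'(k−1)} z + P(ξ)) is injective on a sufficiently small punctured neighborhood: there exist ε, δ > 0 such that if 0 < |ξ_0|, |ξ_1| < ε, |z_0|, |z_1| < δ and f(ξ_0, z_0) = f(ξ_1, z_1), then (ξ_0, z_0) = (ξ_1, z_1). -/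
/-!
Write `ξ₁ = ω ξ₀` with `ω` a `k`-th root of unity. Equality of the second coordinates reads
`P(ω ξ₀) - P(ξ₀) = λ ξ₀ ^ N (z₀ - ω ^ N z₁)`. If `ω ≠ 1`, the gcd condition yields `m ≤ N` with
`c_m ≠ 0` and `ω ^ m ≠ 1`, so the left side is a nonzero polynomial in `ξ₀` vanishing to some
order `m₀ ≤ m` at `0`; near `0` it is at least `a |ξ₀| ^ m₀`, whereas the right side is at most
`2 |λ| δ |ξ₀| ^ m₀`, which is smaller once `δ` is small. There are finitely many `ω`, so one
radius works for all of them; for `ω = 1` cancel `λ ξ₀ ^ N ≠ 0`.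
-/

open Polynomial Filter Topology

theorem exists_pow_ne_one_of_forall_dvd_imp_eq_one {M : Type*} [Monoid M] {ω : M} {k : ℕ}
    {p : ℕ → Prop} (hgcd : ∀ d : ℕ, d ∣ k → (∀ m, p m → d ∣ m) → d = 1) (hω : ω ^ k = 1)
    (hω1 : ω ≠ 1) : ∃ m, p m ∧ ω ^ m ≠ 1 := by
  by_contra! h
  exact hω1 <| orderOf_eq_one_iff.mp <| hgcd _ (orderOf_dvd_of_pow_eq_one hω)
    fun m hm => orderOf_dvd_of_pow_eq_one (h m hm)

namespace Polynomial

variable {𝕜 : Type*} [NormedField 𝕜]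

theorem exists_pos_mul_pow_natTrailingDegree_le_norm_eval {Q : 𝕜[X]} (hQ : Q ≠ 0) :
    ∃ a > (0 : ℝ), ∀ᶠ ξ in 𝓝 0, a * ‖ξ‖ ^ Q.natTrailingDegree ≤ ‖Q.eval ξ‖ := by
  set t := Q.natTrailingDegree
  obtain ⟨R, hR⟩ : X ^ t ∣ Q := X_pow_dvd_iff.mpr fun _ => coeff_eq_zero_of_lt_natTrailingDegree
  have hR0 : R.eval 0 ≠ 0 := by
    rw [← coeff_zero_eq_eval_zero, ← coeff_X_pow_mul _ t, ← hR, zero_add]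
    exact trailingCoeff_nonzero_iff_nonzero.mpr hQ
  refine ⟨‖R.eval 0‖ / 2, by positivity, ?_⟩
  filter_upwards [(R.continuous.norm.tendsto 0).eventually
    (eventually_gt_nhds (half_lt_self (norm_pos_iff.mpr hR0)))] with ξ hξ
  rw [hR, eval_mul, eval_pow, eval_X, norm_mul, norm_pow, mul_comm]
  gcongr

theorem eventually_mul_pow_mul_add_eval_ne_comp {P : 𝕜[X]} {ω : 𝕜} (hω : ‖ω‖ ≤ 1)
    (lam : 𝕜) {m N : ℕ} (hmN : m ≤ N) (hm : P.coeff m ≠ 0) (hωm : ω ^ m ≠ 1) :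
    ∀ᶠ r in 𝓝 (0 : ℝ), ∀ ξ z₀ z₁ : 𝕜, ξ ≠ 0 → ‖ξ‖ < r → ‖z₀‖ < r → ‖z₁‖ < r →
      lam * ξ ^ N * z₀ + P.eval ξ ≠ lam * (ω * ξ) ^ N * z₁ + P.eval (ω * ξ) := by
  set Q := P.comp (C ω * X) - P
  have hQm : Q.coeff m ≠ 0 := by
    simpa [Q, ← mul_sub_one] using mul_ne_zero hm (sub_ne_zero.mpr hωm)
  have hQ : Q ≠ 0 := fun h => hQm (by rw [h, coeff_zero])
  obtain ⟨a, ha, hbound⟩ := exists_pos_mul_pow_natTrailingDegree_le_norm_eval hQ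
  obtain ⟨ρ, hρ, hρbound⟩ := Metric.eventually_nhds_iff.mp hbound
  have hsmall : ∀ᶠ r in 𝓝 (0 : ℝ), ‖lam‖ * (2 * r) < a :=
    (show Continuous fun r : ℝ => ‖lam‖ * (2 * r) by fun_prop).tendsto' 0 0 (by simp)
      |>.eventually (eventually_lt_nhds ha)
  filter_upwards [eventually_lt_nhds hρ, eventually_lt_nhds one_pos, hsmall]
    with r hrρ hr1 hra ξ z₀ z₁ hξ hξr hz₀ hz₁ heq
  have hQξ : Q.eval ξ = lam * ξ ^ N * (z₀ - ω ^ N * z₁) := by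
    simp only [Q, eval_sub, eval_comp, eval_mul, eval_C, eval_X]
    linear_combination -heq
  have hw : ‖z₀ - ω ^ N * z₁‖ < 2 * r := calc
    ‖z₀ - ω ^ N * z₁‖ ≤ ‖z₀‖ + ‖ω ^ N * z₁‖ := norm_sub_le _ _
    _ ≤ ‖z₀‖ + ‖z₁‖ := by
      gcongr
      rw [norm_mul, norm_pow]
      exact mul_le_of_le_one_left (norm_nonneg _) (pow_le_one₀ (norm_nonneg _) hω)
    _ < 2 * r := by linarith
  have hξpow : ‖ξ‖ ^ N ≤ ‖ξ‖ ^ Q.natTrailingDegree :=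
    pow_le_pow_of_le_one (norm_nonneg _) (hξr.trans hr1).le
      ((natTrailingDegree_le_of_ne_zero hQm).trans hmN)
  have hξt : 0 < ‖ξ‖ ^ Q.natTrailingDegree := pow_pos (norm_pos_iff.mpr hξ) _
  have := calc a * ‖ξ‖ ^ Q.natTrailingDegree
      ≤ ‖Q.eval ξ‖ := hρbound (by simpa using hξr.trans hrρ)
    _ = ‖lam‖ * ‖ξ‖ ^ N * ‖z₀ - ω ^ N * z₁‖ := by rw [hQξ, norm_mul, norm_mul, norm_pow]
    _ ≤ ‖lam‖ * ‖ξ‖ ^ Q.natTrailingDegree * (2 * r) := by gcongr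
    _ < a * ‖ξ‖ ^ Q.natTrailingDegree := by
      rw [mul_right_comm]; exact mul_lt_mul_of_pos_right hra hξt
  exact lt_irrefl _ this

theorem eventually_forall_mem_nthRootsFinset_erase_one_ne [DecidableEq 𝕜] {P : 𝕜[X]}
    (lam : 𝕜) {k N : ℕ} (hk : k ≠ 0) (hPN : P.natDegree ≤ N)
    (hgcd : ∀ d : ℕ, d ∣ k → (∀ m, P.coeff m ≠ 0 → d ∣ m) → d = 1) :
    ∀ᶠ r in 𝓝 (0 : ℝ), ∀ ω ∈ (nthRootsFinset k (1 : 𝕜)).erase 1,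
      ∀ ξ z₀ z₁ : 𝕜, ξ ≠ 0 → ‖ξ‖ < r → ‖z₀‖ < r → ‖z₁‖ < r →
        lam * ξ ^ N * z₀ + P.eval ξ ≠ lam * (ω * ξ) ^ N * z₁ + P.eval (ω * ξ) := by
  refine (eventually_all_finset _).mpr fun ω hω => ?_
  obtain ⟨hω1, hω⟩ := Finset.mem_erase.mp hω
  rw [mem_nthRootsFinset (Nat.pos_of_ne_zero hk)] at hω
  obtain ⟨m, hm, hωm⟩ := exists_pow_ne_one_of_forall_dvd_imp_eq_one hgcd hω hω1
  have hnorm : ‖ω‖ = 1 := (pow_eq_one_iff_of_nonneg (norm_nonneg ω) hk).mp (by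
    rw [← norm_pow, hω, norm_one])
  exact eventually_mul_pow_mul_add_eval_ne_comp hnorm.le lam
    ((le_natDegree_of_ne_zero hm).trans hPN) hm hωm

theorem exists_pos_germ_injective [DecidableEq 𝕜] {P : 𝕜[X]} {lam : 𝕜} (hlam : lam ≠ 0)
    {k N : ℕ} (hk : k ≠ 0) (hPN : P.natDegree ≤ N)
    (hgcd : ∀ d : ℕ, d ∣ k → (∀ m, P.coeff m ≠ 0 → d ∣ m) → d = 1) :
    ∃ r > (0 : ℝ), ∀ ξ₀ ξ₁ z₀ z₁ : 𝕜, ξ₀ ≠ 0 → ‖ξ₀‖ < r → ξ₁ ≠ 0 → ‖z₀‖ < r → ‖z₁‖ < r →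
      ξ₀ ^ k = ξ₁ ^ k → lam * ξ₀ ^ N * z₀ + P.eval ξ₀ = lam * ξ₁ ^ N * z₁ + P.eval ξ₁ →
      ξ₀ = ξ₁ ∧ z₀ = z₁ := by
  obtain ⟨r, hr, hr0⟩ :=
    (((eventually_forall_mem_nthRootsFinset_erase_one_ne lam hk hPN hgcd).filter_mono
      nhdsWithin_le_nhds).and (self_mem_nhdsWithin : Set.Ioi (0 : ℝ) ∈ 𝓝[>] 0)).exists
  refine ⟨r, hr0, fun ξ₀ ξ₁ z₀ z₁ hξ₀ hξ₀r hξ₁ hz₀ hz₁ hpow heq => ?_⟩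
  have hωξ₀ : ξ₁ / ξ₀ * ξ₀ = ξ₁ := div_mul_cancel₀ _ hξ₀
  by_cases hω1 : ξ₁ / ξ₀ = 1
  · obtain rfl : ξ₀ = ξ₁ := by rw [← hωξ₀, hω1, one_mul]
    exact ⟨rfl, mul_left_cancel₀ (mul_ne_zero hlam (pow_ne_zero _ hξ₀)) (add_right_cancel heq)⟩
  · have hω : ξ₁ / ξ₀ ∈ (nthRootsFinset k (1 : 𝕜)).erase 1 := by
      rw [Finset.mem_erase, mem_nthRootsFinset (Nat.pos_of_ne_zero hk), div_pow, hpow,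
        div_self (pow_ne_zero _ hξ₁)]
      exact ⟨hω1, rfl⟩
    exact absurd (by rwa [hωξ₀]) (hr _ hω ξ₀ z₀ z₁ hξ₀ hξ₀r hz₀ hz₁)

end Polynomial

theorem germ_locally_injective_general (k : ℕ) (hk : 2 ≤ k) (lam : ℂ) (hlam : lam ≠ 0)
    (N : ℕ) (c : ℕ → ℂ) (hcN : ∀ m, N < m → c m = 0)
    (hgcd : ∀ d : ℕ, d ∣ k → (∀ m, c m ≠ 0 → d ∣ m) → d = 1) :
    ∃ ε > (0:ℝ), ∃ δ > (0:ℝ), ∀ ξ₀ ξ₁ z₀ z₁ : ℂ,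
      ξ₀ ≠ 0 → ‖ξ₀‖ < ε → ξ₁ ≠ 0 → ‖ξ₁‖ < ε →
      ‖z₀‖ < δ → ‖z₁‖ < δ →
      ξ₀ ^ k = ξ₁ ^ k →
      lam * ξ₀ ^ N * z₀ + (∑ m ∈ Finset.range (N + 1), c m * ξ₀ ^ m) =
        lam * ξ₁ ^ N * z₁ + (∑ m ∈ Finset.range (N + 1), c m * ξ₁ ^ m) →
      ξ₀ = ξ₁ ∧ z₀ = z₁ := by
  set P : ℂ[X] := ∑ m ∈ Finset.range (N + 1), C (c m) * X ^ m
  have hPcoeff (m : ℕ) : P.coeff m = c m := by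
    rcases le_or_gt m N with hm | hm
    · simp [P, Nat.lt_succ_of_le hm]
    · simp [P, hcN m hm, hm.not_ge]
  have hPeval (ξ : ℂ) : P.eval ξ = ∑ m ∈ Finset.range (N + 1), c m * ξ ^ m := by
    simp [P, eval_finsetSum]
  obtain ⟨r, hr0, hr⟩ := exists_pos_germ_injective hlam (by omega : k ≠ 0)
    (natDegree_le_iff_coeff_eq_zero.mpr fun m hm => (hPcoeff m).trans (hcN m hm))
    (by simpa only [hPcoeff] using hgcd)
  exact ⟨r, hr0, r, hr0, fun ξ₀ ξ₁ z₀ z₁ hξ₀ hξ₀r hξ₁ _ hz₀ hz₁ hpow heq =>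
    hr ξ₀ ξ₁ z₀ z₁ hξ₀ hξ₀r hξ₁ hz₀ hz₁ hpow (by simpa only [hPeval] using heq)⟩

/-- Section 5 (local injectivity of the contracting germ): let `k ≥ 2`, `λ ≠ 0`, and
`P(ξ) = Σ_{m=1}^{N} c_m ξ^m` with `N = l'(k−1)` and `gcd({k} ∪ {m : c_m ≠ 0}) = 1`.
Then the germ `f(ξ, z) = (ξ^k, λ ξ^{l'(k−1)} z + P(ξ))` is injective on a sufficiently
small punctured neighborhood of `(0,0)`. -/
theorem germ_locally_injective (k : ℕ) (hk : 2 ≤ k) (lam : ℂ) (hlam : lam ≠ 0)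
    (l' : ℕ) (hl' : 1 ≤ l') (N : ℕ) (hN : N = l' * (k - 1))
    (c : ℕ → ℂ) (hc0 : c 0 = 0) (hcN : ∀ m, N < m → c m = 0)
    (hgcd : ∀ d : ℕ, d ∣ k → (∀ m, c m ≠ 0 → d ∣ m) → d = 1) :
    ∃ ε > (0:ℝ), ∃ δ > (0:ℝ), ∀ ξ₀ ξ₁ z₀ z₁ : ℂ,
      ξ₀ ≠ 0 → ‖ξ₀‖ < ε → ξ₁ ≠ 0 → ‖ξ₁‖ < ε →
      ‖z₀‖ < δ → ‖z₁‖ < δ →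
      ξ₀ ^ k = ξ₁ ^ k →
      lam * ξ₀ ^ N * z₀ + (∑ m ∈ Finset.range (N + 1), c m * ξ₀ ^ m) =
        lam * ξ₁ ^ N * z₁ + (∑ m ∈ Finset.range (N + 1), c m * ξ₁ ^ m) →
      ξ₀ = ξ₁ ∧ z₀ = z₁ :=
  germ_locally_injective_general k hk lam hlam N c hcN hgcd
end
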